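/- arXiv:2110.04870 — 6 statements merged into one kernel-verified Lean document; each statement's English description precedes it below -/
import Mathlib

section
/- If M is a complex matrix on (Fin dA × Fin dB) that commutes with (A i) ⊗ₖ 1 for every i ∈ ι, then for every matrix ρ on (Fin dA × Fin dB), trace(ρ * M) = trace(Φ_A(ρ) * M). -/
open Matrix Kronecker BigOperators

/-- The unrevealed-measurement (pinching) map on the bipartite system:
`Φ_A(ρ) = ∑ i, (A i ⊗ₖ 1) * ρ * (A i ⊗ₖ 1)`. -/
noncomputable def pinch {dA dB : ℕ} {ι : Type*} [Fintype ι]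
    (A : ι → Matrix (Fin dA) (Fin dA) ℂ)
    (ρ : Matrix (Fin dA × Fin dB) (Fin dA × Fin dB) ℂ) :
    Matrix (Fin dA × Fin dB) (Fin dA × Fin dB) ℂ :=
  ∑ i, ((A i) ⊗ₖ (1 : Matrix (Fin dB) (Fin dB) ℂ)) * ρ *
    ((A i) ⊗ₖ (1 : Matrix (Fin dB) (Fin dB) ℂ))

/-- If `M` commutes with every `A i ⊗ₖ 1`, then `Tr(ρ M) = Tr(Φ_A(ρ) M)`. -/
theorem trace_pinch_of_commute {dA dB : ℕ} {ι : Type*} [Fintype ι] [DecidableEq ι]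
    (A : ι → Matrix (Fin dA) (Fin dA) ℂ)
    (hproj : ∀ i j, A i * A j = if i = j then A i else 0)
    (hherm : ∀ i, (A i)ᴴ = A i)
    (hsum : ∑ i, A i = 1)
    (M : Matrix (Fin dA × Fin dB) (Fin dA × Fin dB) ℂ)
    (hcomm : ∀ i, M * ((A i) ⊗ₖ (1 : Matrix (Fin dB) (Fin dB) ℂ))
      = ((A i) ⊗ₖ (1 : Matrix (Fin dB) (Fin dB) ℂ)) * M)
    (ρ : Matrix (Fin dA × Fin dB) (Fin dA × Fin dB) ℂ) :
    (ρ * M).trace = (pinch A ρ * M).trace := by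
  set P : ι → Matrix (Fin dA × Fin dB) (Fin dA × Fin dB) ℂ :=
    fun i => (A i) ⊗ₖ (1 : Matrix (Fin dB) (Fin dB) ℂ) with hP
  have hPP : ∀ i, P i * P i = P i := by
    intro i
    simp [hP, ← Matrix.mul_kronecker_mul, hproj i i]
  have hPsum : ∑ i, P i = 1 := by
    rw [show (∑ i, P i) = (∑ i, A i) ⊗ₖ (1 : Matrix (Fin dB) (Fin dB) ℂ) by
      simp [hP, Matrix.kroneckerMap, Matrix.sum_apply, ← Finset.sum_mul,
        ← Matrix.ext_iff, Matrix.sum_apply]]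
    rw [hsum, Matrix.one_kronecker_one]
  have key : ∀ i, (P i * ρ * P i * M).trace = (P i * (ρ * M)).trace := by
    intro i
    calc (P i * ρ * P i * M).trace
        = (P i * ρ * (M * P i)).trace := by rw [mul_assoc, ← hcomm]
      _ = (P i * (P i * ρ * M)).trace := by
          rw [← mul_assoc, Matrix.trace_mul_comm]
      _ = (P i * (ρ * M)).trace := by
          rw [← mul_assoc, ← mul_assoc, hPP, mul_assoc]
  calc (ρ * M).trace = ((∑ i, P i) * (ρ * M)).trace := by rw [hPsum, one_mul]
    _ = ∑ i, (P i * (ρ * M)).trace := by rw [Matrix.sum_mul, Matrix.trace_sum]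
    _ = ∑ i, (P i * ρ * P i * M).trace := by simp [key]
    _ = (pinch A ρ * M).trace := by
        rw [pinch, Matrix.sum_mul, Matrix.trace_sum]
end

section
/- (Lemma 2 of the paper.) Let ρ be a density matrix on (Fin dA × Fin dB), and let hΦ : (Φ_A(ρ)).IsHermitian. Then for every function f : ℝ → ℝ, trace(ρ * (hΦ.cfc f)) = trace(Φ_A(ρ) * (hΦ.cfc f)), where Matrix.IsHermitian.cfc applies f to the eigenvalues of the Hermitian matrix Φ_A(ρ). -/
/-!
The matrices `P i = A i ⊗ₖ 1` are again complete orthogonal idempotents, and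
`P j * Φ_A(ρ) = P j * ρ * P j = Φ_A(ρ) * P j`, so every `P j` commutes with `Φ_A(ρ)` and hence with
`M = f(Φ_A(ρ))`. Then `Tr(P i ρ P i M) = Tr(P i ρ M)` by cyclicity, and summing over `i` with
`∑ i, P i = 1` gives `Tr(Φ_A(ρ) M) = Tr(ρ M)`.
-/

open Matrix Kronecker BigOperators
open scoped ComplexOrder

namespace OrthogonalIdempotents

variable {R ι : Type*} [Semiring R] [Fintype ι] {e : ι → R}

theorem mul_sum_mul_mul (he : OrthogonalIdempotents e) (x : R) (j : ι) :
    e j * ∑ i, e i * x * e i = e j * x * e j := by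
  classical
  simp [Finset.mul_sum, ← mul_assoc, he.mul_eq]

theorem sum_mul_mul_mul (he : OrthogonalIdempotents e) (x : R) (j : ι) :
    (∑ i, e i * x * e i) * e j = e j * x * e j := by
  classical
  simp [Finset.sum_mul, mul_assoc, he.mul_eq]

theorem commute_sum_mul_mul (he : OrthogonalIdempotents e) (x : R) (j : ι) :
    Commute (e j) (∑ i, e i * x * e i) :=
  (he.mul_sum_mul_mul x j).trans (he.sum_mul_mul_mul x j).symm

end OrthogonalIdempotents

theorem CompleteOrthogonalIdempotents.trace_sum_mul_mul_mul {n R ι : Type*} [Fintype n]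
    [DecidableEq n] [CommSemiring R] [Fintype ι] {e : ι → Matrix n n R} (he : CompleteOrthogonalIdempotents e)
    (x M : Matrix n n R) (hM : ∀ i, Commute (e i) M) :
    trace ((∑ i, e i * x * e i) * M) = trace (x * M) := by
  have hterm : ∀ i, trace (e i * x * e i * M) = trace (e i * (x * M)) := fun i => by
    rw [mul_assoc _ (e i), (hM i).eq, ← mul_assoc, trace_mul_cycle, ← mul_assoc,
      (he.idem i).eq, mul_assoc]
  simp_rw [Finset.sum_mul, trace_sum, hterm, ← trace_sum, ← Finset.sum_mul, he.complete, one_mul]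

def Matrix.kroneckerOneRingHom (m n R : Type*) [Fintype m] [DecidableEq m] [Fintype n]
    [DecidableEq n] [CommSemiring R] : Matrix m m R →+* Matrix (m × n) (m × n) R where
  toFun A := A ⊗ₖ 1
  map_one' := one_kronecker_one
  map_mul' A B := by rw [← mul_kronecker_mul, mul_one]
  map_zero' := zero_kronecker 1
  map_add' A B := add_kronecker A B 1

theorem trace_fun_pinch_general {dA dB : ℕ} {ι : Type*} [Fintype ι] [DecidableEq ι]
    (A : ι → Matrix (Fin dA) (Fin dA) ℂ)
    (hproj : ∀ i j, A i * A j = if i = j then A i else 0)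
    (hsum : ∑ i, A i = 1)
    (ρ : Matrix (Fin dA × Fin dB) (Fin dA × Fin dB) ℂ)
    (hΦ : (pinch A ρ).IsHermitian)
    (f : ℝ → ℝ) :
    (ρ * hΦ.cfc f).trace = (pinch A ρ * hΦ.cfc f).trace := by
  have hA : CompleteOrthogonalIdempotents A := ⟨OrthogonalIdempotents.iff_mul_eq.2 hproj, hsum⟩
  have hP := hA.map (kroneckerOneRingHom (Fin dA) (Fin dB) ℂ)
  have hcomm : ∀ i, Commute (A i ⊗ₖ 1) (cfc f (pinch A ρ)) := fun i =>
    ((hP.commute_sum_mul_mul ρ i).symm.cfc_real f).symm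
  rw [← hΦ.cfc_eq]
  exact (hP.trace_sum_mul_mul_mul ρ _ hcomm).symm

/-- Lemma 2 of the paper: for a density matrix `ρ` and any function `f`,
`Tr(ρ f(Φ_A(ρ))) = Tr(Φ_A(ρ) f(Φ_A(ρ)))`. -/
theorem trace_fun_pinch {dA dB : ℕ} {ι : Type*} [Fintype ι] [DecidableEq ι]
    (A : ι → Matrix (Fin dA) (Fin dA) ℂ)
    (hproj : ∀ i j, A i * A j = if i = j then A i else 0)
    (hherm : ∀ i, (A i)ᴴ = A i)
    (hsum : ∑ i, A i = 1)
    (ρ : Matrix (Fin dA × Fin dB) (Fin dA × Fin dB) ℂ)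
    (hρ : ρ.PosSemidef) (htr : ρ.trace = 1)
    (hΦ : (pinch A ρ).IsHermitian)
    (f : ℝ → ℝ) :
    (ρ * hΦ.cfc f).trace = (pinch A ρ * hΦ.cfc f).trace :=
  trace_fun_pinch_general A hproj hsum ρ hΦ f
end

section
/- (Theorem 1 of the paper.) Let P k = (A k) ⊗ₖ (1 : Matrix (Fin dB) (Fin dB) ℂ), let T : ι → Matrix (Fin dE) (Fin dE) ℂ be a family of unitary matrices ((T k) * (T k)ᴴ = 1 = (T k)ᴴ * (T k)), and set U = ∑ k, (P k) ⊗ₖ (T k), a matrix on ((Fin dA × Fin dB) × Fin dE). Then for every matrix ρ on (Fin dA × Fin dB), U * (Φ_A(ρ) ⊗ₖ ((1/dE : ℂ) • 1)) * Uᴴ = Φ_A(ρ) ⊗ₖ ((1/dE : ℂ) • 1); i.e., U commutes with Φ_A(ρ) ⊗ₖ (𝟙_E/dE). -/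
open Matrix Kronecker BigOperators

section OrthogonalIdempotents

variable {R ι : Type*} [Semiring R] [Fintype ι] [DecidableEq ι] {P : ι → R}

theorem mul_sum_mul_mul_self (hP : ∀ i j, P i * P j = if i = j then P i else 0) (ρ : R) (k : ι) :
    P k * ∑ i, P i * ρ * P i = P k * ρ * P k := by
  rw [Finset.mul_sum, Finset.sum_eq_single k]
  · rw [← mul_assoc, ← mul_assoc, hP, if_pos rfl]
  · intro i _ hik
    rw [← mul_assoc, ← mul_assoc, hP, if_neg (Ne.symm hik), zero_mul, zero_mul]
  · simp

theorem sum_mul_mul_self_mul (hP : ∀ i j, P i * P j = if i = j then P i else 0) (ρ : R) (k : ι) :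
    (∑ i, P i * ρ * P i) * P k = P k * ρ * P k := by
  rw [Finset.sum_mul, Finset.sum_eq_single k]
  · rw [mul_assoc, hP, if_pos rfl]
  · intro i _ hik
    rw [mul_assoc, hP, if_neg hik, mul_zero]
  · simp

theorem commute_sum_mul_mul_self (hP : ∀ i j, P i * P j = if i = j then P i else 0) (ρ : R)
    (k : ι) : Commute (P k) (∑ i, P i * ρ * P i) :=
  (mul_sum_mul_mul_self hP ρ k).trans (sum_mul_mul_self_mul hP ρ k).symm

end OrthogonalIdempotents

namespace Matrix

variable {α ι l m n p : Type*} [CommSemiring α]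

theorem sum_kronecker (s : Finset ι) (f : ι → Matrix l m α) (B : Matrix n p α) :
    (∑ i ∈ s, f i) ⊗ₖ B = ∑ i ∈ s, f i ⊗ₖ B := by
  ext
  simp [Matrix.sum_apply, Finset.sum_mul]

theorem conjTranspose_sum_kronecker [StarRing α] [Fintype ι] {P : ι → Matrix m m α}
    (hP : ∀ k, (P k)ᴴ = P k) (T : ι → Matrix n n α) :
    (∑ k, P k ⊗ₖ T k)ᴴ = ∑ k, P k ⊗ₖ (T k)ᴴ := by
  simp only [conjTranspose_sum, conjTranspose_kronecker, hP]

variable [Fintype m] [Fintype n]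

theorem _root_.Commute.kronecker {A C : Matrix m m α} {B D : Matrix n n α} (hAC : Commute A C)
    (hBD : Commute B D) : Commute (A ⊗ₖ B) (C ⊗ₖ D) := by
  rw [Commute, SemiconjBy, ← mul_kronecker_mul, ← mul_kronecker_mul, hAC.eq, hBD.eq]

theorem kronecker_one_mul_kronecker_one [DecidableEq n] (A B : Matrix m m α) :
    (A ⊗ₖ (1 : Matrix n n α)) * (B ⊗ₖ (1 : Matrix n n α)) = (A * B) ⊗ₖ (1 : Matrix n n α) := by
  rw [← mul_kronecker_mul, one_mul]

variable [Fintype ι] [DecidableEq ι] {P : ι → Matrix m m α}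

theorem sum_kronecker_mul_sum_kronecker (hP : ∀ i j, P i * P j = if i = j then P i else 0)
    (T S : ι → Matrix n n α) :
    (∑ k, P k ⊗ₖ T k) * (∑ k, P k ⊗ₖ S k) = ∑ k, P k ⊗ₖ (T k * S k) := by
  rw [Finset.sum_mul]
  refine Finset.sum_congr rfl fun k _ => ?_
  rw [Finset.mul_sum, Finset.sum_eq_single k]
  · rw [← mul_kronecker_mul, hP, if_pos rfl]
  · intro j _ hjk
    rw [← mul_kronecker_mul, hP, if_neg (Ne.symm hjk), zero_kronecker]
  · simp

theorem sum_kronecker_mul_conjTranspose_self [StarRing α] [DecidableEq m] [DecidableEq n]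
    (hP : ∀ i j, P i * P j = if i = j then P i else 0) (hPherm : ∀ k, (P k)ᴴ = P k)
    (hPsum : ∑ k, P k = 1) {T : ι → Matrix n n α} (hT : ∀ k, T k * (T k)ᴴ = 1) :
    (∑ k, P k ⊗ₖ T k) * (∑ k, P k ⊗ₖ T k)ᴴ = 1 := by
  simp only [conjTranspose_sum_kronecker hPherm, sum_kronecker_mul_sum_kronecker hP, hT,
    ← sum_kronecker, hPsum, one_kronecker_one]

end Matrix

/-- Theorem 1 of the paper: the Stinespring unitary `U = ∑ k, P k ⊗ₖ T k` commutes with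
`Φ_A(ρ) ⊗ₖ (𝟙_E / dE)`. -/
theorem stinespring_unitary_commutes {dA dB dE : ℕ} {ι : Type*} [Fintype ι] [DecidableEq ι]
    (A : ι → Matrix (Fin dA) (Fin dA) ℂ)
    (hproj : ∀ i j, A i * A j = if i = j then A i else 0)
    (hherm : ∀ i, (A i)ᴴ = A i)
    (hsum : ∑ i, A i = 1)
    (T : ι → Matrix (Fin dE) (Fin dE) ℂ)
    (hT : ∀ k, (T k) * (T k)ᴴ = 1 ∧ (T k)ᴴ * (T k) = 1)
    (U : Matrix ((Fin dA × Fin dB) × Fin dE) ((Fin dA × Fin dB) × Fin dE) ℂ)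
    (hU : U = ∑ k, (((A k) ⊗ₖ (1 : Matrix (Fin dB) (Fin dB) ℂ)) ⊗ₖ (T k)))
    (ρ : Matrix (Fin dA × Fin dB) (Fin dA × Fin dB) ℂ) :
    U * ((pinch A ρ) ⊗ₖ ((1 / (dE : ℂ)) • (1 : Matrix (Fin dE) (Fin dE) ℂ))) * Uᴴ
      = (pinch A ρ) ⊗ₖ ((1 / (dE : ℂ)) • (1 : Matrix (Fin dE) (Fin dE) ℂ)) := by
  set P : ι → Matrix (Fin dA × Fin dB) (Fin dA × Fin dB) ℂ :=
    fun k => A k ⊗ₖ (1 : Matrix (Fin dB) (Fin dB) ℂ)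
  have hP : ∀ i j, P i * P j = if i = j then P i else 0 := fun i j => by
    simp only [P, kronecker_one_mul_kronecker_one, hproj]
    split_ifs <;> simp only [zero_kronecker]
  have hPherm : ∀ k, (P k)ᴴ = P k := fun k => by
    simp only [P, conjTranspose_kronecker, hherm, conjTranspose_one]
  have hPsum : ∑ k, P k = 1 := by
    simp only [P, ← sum_kronecker, hsum, one_kronecker_one]
  have hcomm : Commute U (pinch A ρ ⊗ₖ ((1 / (dE : ℂ)) • 1)) := hU ▸
    Commute.sum_left _ _ _ fun k _ =>
      (commute_sum_mul_mul_self hP ρ k).kronecker ((Commute.one_right _).smul_right _)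
  have hunitary : U * Uᴴ = 1 :=
    hU ▸ sum_kronecker_mul_conjTranspose_self hP hPherm hPsum fun k => (hT k).1
  rw [hcomm.eq, mul_assoc, hunitary, mul_one]
end

section
/- (Stinespring dilation of the pinching, Eq. (B3) of the paper.) Let P k = (A k) ⊗ₖ (1 : Matrix (Fin dB) (Fin dB) ℂ), let T : ι → Matrix (Fin dE) (Fin dE) ℂ be a family of unitary matrices, and let e0 : Fin dE → ℂ be a vector satisfying star e0 ⬝ᵥ ((T j)ᴴ * (T i)) *ᵥ e0 = (if i = j then 1 else 0) for all i, j ∈ ι. Set U = ∑ k, (P k) ⊗ₖ (T k). Then for every matrix ρ on (Fin dA × Fin dB), Tr_E(U * (ρ ⊗ₖ vecMulVec e0 (star e0)) * Uᴴ) = Φ_A(ρ), where Tr_E is the partial trace over the last factor, (Tr_E M) s s' = ∑ e, M (s,e) (s',e). -/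
open Matrix Kronecker BigOperators

/-- Partial trace over the last (environment) factor. -/
noncomputable def trE {S E : Type*} [Fintype E]
    (M : Matrix (S × E) (S × E) ℂ) : Matrix S S ℂ :=
  fun s s' => ∑ e, M (s, e) (s', e)

lemma kron_conjTranspose {m n p q : Type*} (X : Matrix m n ℂ) (Y : Matrix p q ℂ) :
    (X ⊗ₖ Y)ᴴ = Xᴴ ⊗ₖ Yᴴ := by
  ext i j
  simp [conjTranspose_apply, kroneckerMap_apply]

lemma trE_kron {S E : Type*} [Fintype E] (X : Matrix S S ℂ) (Y : Matrix E E ℂ) :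
    trE (X ⊗ₖ Y) = Y.trace • X := by
  ext s s'
  simp [trE, kroneckerMap_apply, Matrix.trace, Matrix.diag, Finset.mul_sum, mul_comm]

lemma trE_sum {S E : Type*} [Fintype E] {ι : Type*} (s : Finset ι)
    (f : ι → Matrix (S × E) (S × E) ℂ) :
    trE (∑ k ∈ s, f k) = ∑ k ∈ s, trE (f k) := by
  ext a b
  simp only [trE, Matrix.sum_apply]
  rw [Finset.sum_comm]

/-- Eq. (B3) of the paper: the Stinespring dilation of the pinching:
`Tr_E (U (ρ ⊗ |e0⟩⟨e0|) Uᴴ) = Φ_A(ρ)`. -/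
theorem stinespring_dilation_pinch {dA dB dE : ℕ} {ι : Type*} [Fintype ι] [DecidableEq ι]
    (A : ι → Matrix (Fin dA) (Fin dA) ℂ)
    (hproj : ∀ i j, A i * A j = if i = j then A i else 0)
    (hherm : ∀ i, (A i)ᴴ = A i)
    (hsum : ∑ i, A i = 1)
    (T : ι → Matrix (Fin dE) (Fin dE) ℂ)
    (hT : ∀ k, (T k) * (T k)ᴴ = 1 ∧ (T k)ᴴ * (T k) = 1)
    (e0 : Fin dE → ℂ)
    (he0 : ∀ i j, star e0 ⬝ᵥ (((T j)ᴴ * (T i)) *ᵥ e0) = if i = j then 1 else 0)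
    (U : Matrix ((Fin dA × Fin dB) × Fin dE) ((Fin dA × Fin dB) × Fin dE) ℂ)
    (hU : U = ∑ k, (((A k) ⊗ₖ (1 : Matrix (Fin dB) (Fin dB) ℂ)) ⊗ₖ (T k)))
    (ρ : Matrix (Fin dA × Fin dB) (Fin dA × Fin dB) ℂ) :
    trE (U * (ρ ⊗ₖ vecMulVec e0 (star e0)) * Uᴴ) = pinch A ρ := by
  set P : ι → Matrix (Fin dA × Fin dB) (Fin dA × Fin dB) ℂ :=
    fun k => (A k) ⊗ₖ (1 : Matrix (Fin dB) (Fin dB) ℂ) with hP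
  have hPH : ∀ k, (P k)ᴴ = P k := by
    intro k
    rw [hP, kron_conjTranspose, hherm, conjTranspose_one]
  have key : U * (ρ ⊗ₖ vecMulVec e0 (star e0)) * Uᴴ =
      ∑ l, ∑ k, (P k * ρ * P l) ⊗ₖ (T k * vecMulVec e0 (star e0) * (T l)ᴴ) := by
    rw [hU, conjTranspose_sum, Finset.mul_sum]
    refine Finset.sum_congr rfl fun l _ => ?_
    rw [Finset.sum_mul, Finset.sum_mul]
    refine Finset.sum_congr rfl fun k _ => ?_
    rw [kron_conjTranspose, hPH, mul_kronecker_mul, mul_kronecker_mul]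
  have htr : ∀ k l, (T k * vecMulVec e0 (star e0) * (T l)ᴴ).trace = if k = l then 1 else 0 := by
    intro k l
    rw [trace_mul_comm, ← Matrix.mul_assoc]
    have : ((T l)ᴴ * T k * vecMulVec e0 (star e0)).trace =
        star e0 ⬝ᵥ (((T l)ᴴ * T k) *ᵥ e0) := by
      simp [Matrix.trace, Matrix.diag, mul_apply, vecMulVec_apply, dotProduct, mulVec,
        Finset.mul_sum, mul_comm, mul_left_comm]
    rw [this, he0]
  rw [key, trE_sum]
  have hinner : ∀ l, (∑ k, trE ((P k * ρ * P l) ⊗ₖ (T k * vecMulVec e0 (star e0) * (T l)ᴴ)))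
      = P l * ρ * P l := by
    intro l
    have : ∀ k, trE ((P k * ρ * P l) ⊗ₖ (T k * vecMulVec e0 (star e0) * (T l)ᴴ))
        = if k = l then P k * ρ * P l else 0 := by
      intro k
      rw [trE_kron, htr]
      by_cases h : k = l <;> simp [h]
    simp only [this]
    simp
  calc ∑ l, trE (∑ k, (P k * ρ * P l) ⊗ₖ (T k * vecMulVec e0 (star e0) * (T l)ᴴ))
      = ∑ l, P l * ρ * P l := by
        refine Finset.sum_congr rfl fun l _ => ?_
        rw [trE_sum, hinner]
    _ = pinch A ρ := rfl
end

section
/- (Positive definiteness of the irreality; part of Axiom 2 verification.) For every density matrix ρ on (Fin dA × Fin dB), S(Φ_A(ρ)) ≥ S(ρ), and equality holds if and only if Φ_A(ρ) = ρ. Consequently the A-irreality 𝕴_A(ρ) = S(Φ_A(ρ)) − S(ρ) is nonnegative and vanishes exactly on A-reality states. -/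
open Matrix Kronecker BigOperators
open scoped ComplexOrder

/-- The von Neumann entropy of a Hermitian matrix, via its eigenvalues. -/
noncomputable def vnEntropy {n : Type*} [Fintype n] [DecidableEq n]
    {ρ : Matrix n n ℂ} (hρ : ρ.IsHermitian) : ℝ :=
  ∑ k, Real.negMulLog (hρ.eigenvalues k)

lemma vnEntropy_congr {n : Type*} [Fintype n] [DecidableEq n]
    {M N : Matrix n n ℂ} (h : M = N) (hM : M.IsHermitian) (hN : N.IsHermitian) :
    vnEntropy hM = vnEntropy hN := by subst h; rfl

lemma engine {n ι : Type*} [Fintype n] [DecidableEq n] [Fintype ι] [DecidableEq ι]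
    (P : ι → Matrix n n ℂ)
    (hproj : ∀ i j, P i * P j = if i = j then P i else 0)
    (hherm : ∀ i, (P i)ᴴ = P i)
    (hsum : ∑ i, P i = 1)
    {ρ : Matrix n n ℂ} (hρ : ρ.PosSemidef)
    {σ : Matrix n n ℂ} (hσdef : σ = ∑ i, P i * ρ * P i) (hσ : σ.IsHermitian) :
    vnEntropy hρ.isHermitian ≤ vnEntropy hσ ∧
      (vnEntropy hσ = vnEntropy hρ.isHermitian ↔ σ = ρ) := by
  set U : Matrix n n ℂ := (hρ.isHermitian.eigenvectorUnitary : Matrix n n ℂ) with hU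
  set V : Matrix n n ℂ := (hσ.eigenvectorUnitary : Matrix n n ℂ) with hV
  set lam : n → ℝ := hρ.isHermitian.eigenvalues with hlam
  set mu : n → ℝ := hσ.eigenvalues with hmu
  have hUm : U ∈ Matrix.unitaryGroup n ℂ := (hρ.isHermitian.eigenvectorUnitary).2
  have hVm : V ∈ Matrix.unitaryGroup n ℂ := (hσ.eigenvectorUnitary).2
  have hU1 : U * Uᴴ = 1 := (Matrix.mem_unitaryGroup_iff).mp hUm
  have hU2 : Uᴴ * U = 1 := (Matrix.mem_unitaryGroup_iff').mp hUm
  have hV1 : V * Vᴴ = 1 := (Matrix.mem_unitaryGroup_iff).mp hVm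
  have hV2 : Vᴴ * V = 1 := (Matrix.mem_unitaryGroup_iff').mp hVm
  have hspecρ : ρ = U * Matrix.diagonal (RCLike.ofReal ∘ lam) * Uᴴ :=
    hρ.isHermitian.spectral_theorem
  have hspecσ : σ = V * Matrix.diagonal (RCLike.ofReal ∘ mu) * Vᴴ :=
    hσ.spectral_theorem
  have hlam0 : ∀ k, 0 ≤ lam k := fun k => hρ.eigenvalues_nonneg k
  set M : ι → Matrix n n ℂ := fun i => Uᴴ * P i * V with hM
  set B : n → n → ℝ := fun j k => ∑ i, Complex.normSq (M i k j) with hB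
  have hB0 : ∀ j k, 0 ≤ B j k := fun j k =>
    Finset.sum_nonneg fun i _ => Complex.normSq_nonneg _
  have hMH : ∀ i, (M i)ᴴ = Vᴴ * P i * U := by
    intro i
    simp [hM, Matrix.conjTranspose_mul, hherm, Matrix.mul_assoc]
  -- key1 : ∑ i, (M i)ᴴ * M i = 1
  have key1 : ∑ i, (M i)ᴴ * M i = 1 := by
    have h1 : ∀ i, (M i)ᴴ * M i = Vᴴ * (P i * V) := by
      intro i
      rw [hMH, hM]
      simp only [Matrix.mul_assoc]
      rw [← Matrix.mul_assoc U Uᴴ, hU1, Matrix.one_mul,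
        ← Matrix.mul_assoc (P i) (P i), hproj i i, if_pos rfl]
    simp only [h1]
    rw [← Finset.mul_sum, ← Finset.sum_mul, hsum, Matrix.one_mul, hV2]
  -- key1' : ∑ i, M i * (M i)ᴴ = 1
  have key1' : ∑ i, M i * (M i)ᴴ = 1 := by
    have h1 : ∀ i, M i * (M i)ᴴ = Uᴴ * (P i * U) := by
      intro i
      rw [hMH, hM]
      simp only [Matrix.mul_assoc]
      rw [← Matrix.mul_assoc V Vᴴ, hV1, Matrix.one_mul,
        ← Matrix.mul_assoc (P i) (P i), hproj i i, if_pos rfl]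
    simp only [h1]
    rw [← Finset.mul_sum, ← Finset.sum_mul, hsum, Matrix.one_mul, hU2]
  -- key2 : diagonal mu = ∑ i, (M i)ᴴ * diagonal lam * M i
  have key2 : Matrix.diagonal (RCLike.ofReal ∘ mu) =
      ∑ i, (M i)ᴴ * Matrix.diagonal (RCLike.ofReal ∘ lam) * M i := by
    have hD : Matrix.diagonal (RCLike.ofReal ∘ mu) = Vᴴ * σ * V := by
      rw [hspecσ]
      simp only [Matrix.mul_assoc]
      rw [hV2, Matrix.mul_one, ← Matrix.mul_assoc Vᴴ V, hV2, Matrix.one_mul]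
    rw [hD, hσdef, Finset.mul_sum, Finset.sum_mul]
    refine Finset.sum_congr rfl fun i _ => ?_
    rw [hspecρ, hMH, hM]
    simp only [Matrix.mul_assoc]
  -- row sums of B are 1
  have hrow : ∀ j, ∑ k, B j k = 1 := by
    intro j
    have h0 := congrFun (congrFun key1 j) j
    rw [Matrix.sum_apply, Matrix.one_apply_eq] at h0
    have h2 : ∀ i, ((M i)ᴴ * M i) j j = ((∑ k, Complex.normSq (M i k j) : ℝ) : ℂ) := by
      intro i
      rw [Matrix.mul_apply]
      push_cast
      refine Finset.sum_congr rfl fun k _ => ?_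
      rw [Matrix.conjTranspose_apply, Complex.star_def, Complex.normSq_eq_conj_mul_self]
    simp only [h2] at h0
    push_cast at h0
    have : ((∑ k, B j k : ℝ) : ℂ) = 1 := by
      rw [hB]
      push_cast
      rw [Finset.sum_comm]
      exact h0
    exact_mod_cast this
  -- column sums of B are 1
  have hcol : ∀ k, ∑ j, B j k = 1 := by
    intro k
    have h0 := congrFun (congrFun key1' k) k
    rw [Matrix.sum_apply, Matrix.one_apply_eq] at h0
    have h2 : ∀ i, (M i * (M i)ᴴ) k k = ((∑ j, Complex.normSq (M i k j) : ℝ) : ℂ) := by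
      intro i
      rw [Matrix.mul_apply]
      push_cast
      refine Finset.sum_congr rfl fun j _ => ?_
      rw [Matrix.conjTranspose_apply, Complex.star_def, Complex.mul_conj]
    simp only [h2] at h0
    push_cast at h0
    have : ((∑ j, B j k : ℝ) : ℂ) = 1 := by
      rw [hB]
      push_cast
      rw [Finset.sum_comm]
      exact h0
    exact_mod_cast this
  -- mu j = ∑ k, B j k * lam k
  have hmuB : ∀ j, mu j = ∑ k, B j k * lam k := by
    intro j
    have h0 := congrFun (congrFun key2 j) j
    rw [Matrix.sum_apply, Matrix.diagonal_apply_eq] at h0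
    have h2 : ∀ i, (((M i)ᴴ * Matrix.diagonal (RCLike.ofReal ∘ lam) * M i : Matrix n n ℂ)) j j
        = ((∑ k, Complex.normSq (M i k j) * lam k : ℝ) : ℂ) := by
      intro i
      rw [Matrix.mul_assoc, Matrix.mul_apply]
      push_cast
      refine Finset.sum_congr rfl fun k _ => ?_
      rw [Matrix.conjTranspose_apply, Matrix.diagonal_mul, Complex.star_def,
        Complex.normSq_eq_conj_mul_self]
      simp only [Function.comp_apply]
      have hco : (RCLike.ofReal (lam k) : ℂ) = ((lam k : ℝ) : ℂ) := rfl
      rw [hco]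
      ring
    simp only [h2] at h0
    simp only [Function.comp_apply] at h0
    have hco : (RCLike.ofReal (mu j) : ℂ) = ((mu j : ℝ) : ℂ) := rfl
    rw [hco] at h0
    push_cast at h0
    have : ((mu j : ℝ) : ℂ) = ((∑ k, B j k * lam k : ℝ) : ℂ) := by
      rw [hB]
      push_cast
      rw [h0, Finset.sum_comm]
      refine Finset.sum_congr rfl fun k _ => ?_
      rw [Finset.sum_mul]
    exact_mod_cast this
  -- Jensen per row
  have jensen : ∀ j, ∑ k, B j k * Real.negMulLog (lam k) ≤ Real.negMulLog (mu j) := by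
    intro j
    have h := Real.concaveOn_negMulLog.le_map_sum
      (t := Finset.univ) (w := B j) (p := lam)
      (fun k _ => hB0 j k) (hrow j) (fun k _ => hlam0 k)
    simp only [smul_eq_mul] at h
    rw [hmuB j]
    exact h
  -- Sum over j of the Jensen lower bounds equals the entropy of ρ
  have hdouble : ∑ j, ∑ k, B j k * Real.negMulLog (lam k)
      = ∑ k, Real.negMulLog (lam k) := by
    rw [Finset.sum_comm]
    refine Finset.sum_congr rfl fun k _ => ?_
    rw [← Finset.sum_mul, hcol k, one_mul]
  have hSρ : vnEntropy hρ.isHermitian = ∑ k, Real.negMulLog (lam k) := rfl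
  have hSσ : vnEntropy hσ = ∑ j, Real.negMulLog (mu j) := rfl
  have hineq : vnEntropy hρ.isHermitian ≤ vnEntropy hσ := by
    rw [hSρ, hSσ, ← hdouble]
    exact Finset.sum_le_sum fun j _ => jensen j
  refine ⟨hineq, ?_, fun h => (vnEntropy_congr h hσ hρ.isHermitian)⟩
  -- equality case
  intro heq
  have hterm : ∀ j, Real.negMulLog (mu j) = ∑ k, B j k * Real.negMulLog (lam k) := by
    have hzero : ∑ j, (Real.negMulLog (mu j) - ∑ k, B j k * Real.negMulLog (lam k)) = 0 := by
      rw [Finset.sum_sub_distrib, hdouble, ← hSρ, ← hSσ, heq, sub_self]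
    intro j
    have := (Finset.sum_eq_zero_iff_of_nonneg
      (fun j _ => sub_nonneg.mpr (jensen j))).mp hzero j (Finset.mem_univ j)
    linarith [this]
  have hsupp : ∀ j k, B j k ≠ 0 → lam k = mu j := by
    intro j k hjk
    have h := (Real.strictConcaveOn_negMulLog.map_sum_eq_iff'
      (t := Finset.univ) (w := B j) (p := lam)
      (fun k _ => hB0 j k) (hrow j) (fun k _ => hlam0 k)).mp ?_ k (Finset.mem_univ k) hjk
    · rw [h]
      simp only [smul_eq_mul]
      exact (hmuB j).symm
    · simp only [smul_eq_mul]
      rw [← hmuB j]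
      exact hterm j
  -- conclude σ = ρ
  set W : Matrix n n ℂ := Uᴴ * V with hW
  have hWsum : W = ∑ i, M i := by
    rw [hW, hM, ← Finset.sum_mul, ← Finset.mul_sum, hsum, Matrix.mul_one]
  have hDW : Matrix.diagonal (RCLike.ofReal ∘ lam) * W
      = W * Matrix.diagonal (RCLike.ofReal ∘ mu) := by
    ext k j
    rw [Matrix.diagonal_mul, Matrix.mul_diagonal]
    simp only [Function.comp_apply]
    by_cases hw : W k j = 0
    · rw [hw, mul_zero, zero_mul]
    · have hex : ∃ i, M i k j ≠ 0 := by
        by_contra hno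
        push_neg at hno
        apply hw
        rw [hWsum, Matrix.sum_apply]
        exact Finset.sum_eq_zero fun i _ => hno i
      obtain ⟨i, hi⟩ := hex
      have hBpos : B j k ≠ 0 := by
        have : 0 < Complex.normSq (M i k j) := Complex.normSq_pos.mpr hi
        have hle : Complex.normSq (M i k j) ≤ B j k :=
          Finset.single_le_sum (fun i _ => Complex.normSq_nonneg (M i k j))
            (Finset.mem_univ i)
        linarith
      rw [hsupp j k hBpos]
      ring
  have hρV : ρ * V = V * Matrix.diagonal (RCLike.ofReal ∘ mu) := by
    rw [hspecρ]
    calc U * Matrix.diagonal (RCLike.ofReal ∘ lam) * Uᴴ * V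
        = U * (Matrix.diagonal (RCLike.ofReal ∘ lam) * W) := by
          rw [hW]; simp only [Matrix.mul_assoc]
      _ = U * (W * Matrix.diagonal (RCLike.ofReal ∘ mu)) := by rw [hDW]
      _ = (U * Uᴴ) * (V * Matrix.diagonal (RCLike.ofReal ∘ mu)) := by
          rw [hW]; simp only [Matrix.mul_assoc]
      _ = V * Matrix.diagonal (RCLike.ofReal ∘ mu) := by rw [hU1, Matrix.one_mul]
  rw [hspecσ, ← hρV, Matrix.mul_assoc, hV1, Matrix.mul_one]

lemma kron_one_herm {dA dB : ℕ} (X : Matrix (Fin dA) (Fin dA) ℂ) (hX : Xᴴ = X) :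
    ((X ⊗ₖ (1 : Matrix (Fin dB) (Fin dB) ℂ)))ᴴ = X ⊗ₖ (1 : Matrix (Fin dB) (Fin dB) ℂ) := by
  ext ⟨a, b⟩ ⟨c, d⟩
  have h1 : star (X c a) = X a c := by
    conv_rhs => rw [← hX]
    rfl
  have h2 : star ((1 : Matrix (Fin dB) (Fin dB) ℂ) d b)
      = (1 : Matrix (Fin dB) (Fin dB) ℂ) b d := by
    rw [← Matrix.conjTranspose_apply, Matrix.conjTranspose_one]
  simp only [Matrix.conjTranspose_apply, Matrix.kroneckerMap_apply, star_mul', h1, h2]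

lemma sum_kron_one {dA dB : ℕ} {ι : Type*} [Fintype ι]
    (A : ι → Matrix (Fin dA) (Fin dA) ℂ) :
    (∑ i, A i) ⊗ₖ (1 : Matrix (Fin dB) (Fin dB) ℂ)
      = ∑ i, (A i) ⊗ₖ (1 : Matrix (Fin dB) (Fin dB) ℂ) := by
  ext ⟨a, b⟩ ⟨c, d⟩
  simp [Matrix.kroneckerMap_apply, Matrix.sum_apply, Finset.sum_mul]

/-- Positive definiteness of the irreality: `S(Φ_A(ρ)) ≥ S(ρ)`, with equality iff
`Φ_A(ρ) = ρ`; hence the A-irreality `𝕴_A(ρ) = S(Φ_A(ρ)) − S(ρ)` is nonnegative and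
vanishes exactly on A-reality states. -/
theorem entropy_pinch_ge {dA dB : ℕ} {ι : Type*} [Fintype ι] [DecidableEq ι]
    (A : ι → Matrix (Fin dA) (Fin dA) ℂ)
    (hproj : ∀ i j, A i * A j = if i = j then A i else 0)
    (hherm : ∀ i, (A i)ᴴ = A i)
    (hsum : ∑ i, A i = 1)
    (ρ : Matrix (Fin dA × Fin dB) (Fin dA × Fin dB) ℂ)
    (hρ : ρ.PosSemidef) (htr : ρ.trace = 1)
    (hΦ : (pinch A ρ).IsHermitian) :
    vnEntropy hρ.isHermitian ≤ vnEntropy hΦ ∧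
      (vnEntropy hΦ = vnEntropy hρ.isHermitian ↔ pinch A ρ = ρ) := by
  set P : ι → Matrix (Fin dA × Fin dB) (Fin dA × Fin dB) ℂ :=
    fun i => (A i) ⊗ₖ (1 : Matrix (Fin dB) (Fin dB) ℂ) with hP
  have hPproj : ∀ i j, P i * P j = if i = j then P i else 0 := by
    intro i j
    rw [hP]
    simp only
    rw [← Matrix.mul_kronecker_mul, hproj i j]
    split
    · rw [Matrix.one_mul]
    · rw [Matrix.one_mul, Matrix.zero_kronecker]
  have hPherm : ∀ i, (P i)ᴴ = P i := fun i => kron_one_herm (A i) (hherm i)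
  have hPsum : ∑ i, P i = 1 := by
    rw [hP]
    simp only
    rw [← sum_kron_one, hsum, Matrix.one_kronecker_one]
  exact engine P hPproj hPherm hPsum hρ rfl hΦ
end

section
/- (Monitoring inequality of the paper.) For every density matrix ρ on (Fin dA × Fin dB) and every ε ∈ [0,1], setting M_A^ε(ρ) = (1−ε) • ρ + ε • Φ_A(ρ): one has Φ_A(M_A^ε(ρ)) = Φ_A(ρ) and S(Φ_A(ρ)) − S(M_A^ε(ρ)) ≤ (1−ε) · (S(Φ_A(ρ)) − S(ρ)); equivalently, ℜ_A(M_A^ε(ρ)) − ℜ_A(ρ) ≥ ε · 𝕴_A(ρ), where 𝕴_A(ρ) = S(Φ_A(ρ)) − S(ρ) and ℜ_A(ρ) = Real.log dA − 𝕴_A(ρ). -/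
open Matrix Kronecker BigOperators
open scoped ComplexOrder

/-!
`Φ_A` is linear and idempotent, which gives `Φ_A(M_A^ε(ρ)) = Φ_A(ρ)`. The entropy bound is the
concavity `S((1-ε)ρ + εΦ_A(ρ)) ≥ (1-ε) S(ρ) + ε S(Φ_A(ρ))`, proved in an eigenbasis of the
mixture: there its eigenvalues are the same convex combination of the diagonals of `ρ` and
`Φ_A(ρ)`, and the diagonal of a positive semidefinite matrix in any orthonormal basis is the
image of its spectrum under a doubly stochastic matrix (the squared moduli of a unitary), so by
concavity of `negMulLog` its entropy is at most that of the diagonal.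
-/

section Pinch

variable {dA dB : ℕ} {ι : Type*} [Fintype ι] (A : ι → Matrix (Fin dA) (Fin dA) ℂ)

lemma pinch_add (ρ σ : Matrix (Fin dA × Fin dB) (Fin dA × Fin dB) ℂ) :
    pinch A (ρ + σ) = pinch A ρ + pinch A σ := by
  simp only [pinch, Matrix.mul_add, Matrix.add_mul, Finset.sum_add_distrib]

lemma pinch_smul (c : ℝ) (ρ : Matrix (Fin dA × Fin dB) (Fin dA × Fin dB) ℂ) :
    pinch A (c • ρ) = c • pinch A ρ := by
  simp only [pinch, Matrix.mul_smul, Matrix.smul_mul, Finset.smul_sum]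

lemma pinch_pinch [DecidableEq ι] (hproj : ∀ i j, A i * A j = if i = j then A i else 0)
    (ρ : Matrix (Fin dA × Fin dB) (Fin dA × Fin dB) ℂ) :
    pinch A (pinch A ρ) = pinch A ρ := by
  unfold pinch
  have hP : ∀ i j, (A i ⊗ₖ (1 : Matrix (Fin dB) (Fin dB) ℂ)) * (A j ⊗ₖ 1) =
      if i = j then A i ⊗ₖ 1 else 0 := by
    intro i j
    rw [← mul_kronecker_mul, hproj, one_mul]
    split_ifs <;> simp
  refine Finset.sum_congr rfl fun i _ => ?_
  have hterm : ∀ j, (A i ⊗ₖ (1 : Matrix (Fin dB) (Fin dB) ℂ)) * ((A j ⊗ₖ 1) * ρ * (A j ⊗ₖ 1)) *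
      (A i ⊗ₖ 1) = if j = i then (A i ⊗ₖ 1) * ρ * (A i ⊗ₖ 1) else 0 := by
    intro j
    calc _ = ((A i ⊗ₖ 1) * (A j ⊗ₖ 1)) * ρ * ((A j ⊗ₖ 1) * (A i ⊗ₖ 1)) := by
          simp only [Matrix.mul_assoc]
      _ = _ := by
          rw [hP, hP]
          rcases eq_or_ne j i with rfl | h
          · simp
          · simp [h, h.symm]
  simp only [Finset.mul_sum, Finset.sum_mul, hterm, Finset.sum_ite_eq', Finset.mem_univ, if_true]

lemma Matrix.PosSemidef.pinch (hherm : ∀ i, (A i)ᴴ = A i)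
    {ρ : Matrix (Fin dA × Fin dB) (Fin dA × Fin dB) ℂ} (hρ : ρ.PosSemidef) :
    (pinch A ρ).PosSemidef := by
  refine Matrix.posSemidef_sum _ fun i _ => ?_
  simpa [conjTranspose_kronecker, hherm i] using
    hρ.mul_mul_conjTranspose_same (A i ⊗ₖ (1 : Matrix (Fin dB) (Fin dB) ℂ))

end Pinch

section Entropy

variable {n : Type*} [Fintype n]

lemma Matrix.PosSemidef.re_diag_conj_nonneg {σ : Matrix n n ℂ} (hσ : σ.PosSemidef)
    (U : Matrix n n ℂ) (k : n) : 0 ≤ ((star U * σ * U) k k).re :=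
  (Complex.le_def.1 (hσ.conjTranspose_mul_mul_same U).diag_nonneg).1

variable [DecidableEq n]

lemma ConcaveOn.sum_le_sum_mulVec_of_mem_doublyStochastic {f : ℝ → ℝ} {s : Set ℝ}
    (hf : ConcaveOn ℝ s f) {W : Matrix n n ℝ} (hW : W ∈ doublyStochastic ℝ n) {p : n → ℝ}
    (hp : ∀ j, p j ∈ s) :
    ∑ j, f (p j) ≤ ∑ k, f ((W *ᵥ p) k) :=
  calc ∑ j, f (p j) = ∑ j, (∑ k, W k j) * f (p j) := by
        simp [sum_col_of_mem_doublyStochastic hW]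
    _ = ∑ k, ∑ j, W k j • f (p j) := by
        simp only [Finset.sum_mul, smul_eq_mul]
        exact Finset.sum_comm
    _ ≤ ∑ k, f (∑ j, W k j • p j) := Finset.sum_le_sum fun k _ =>
        hf.le_map_sum (fun _ _ => nonneg_of_mem_doublyStochastic hW)
          (sum_row_of_mem_doublyStochastic hW k) (fun j _ => hp j)
    _ = ∑ k, f ((W *ᵥ p) k) := by simp [mulVec, dotProduct]

lemma Matrix.map_normSq_mem_doublyStochastic {V : Matrix n n ℂ} (hV : V ∈ unitaryGroup n ℂ) :
    V.map Complex.normSq ∈ doublyStochastic ℝ n := by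
  have hdiag : ∀ {X Y : Matrix n n ℂ}, X * Y = 1 → ∀ k, ∑ j, (X k j * Y j k).re = 1 := by
    intro X Y hXY k
    simpa [Matrix.mul_apply, Complex.re_sum] using congrArg (fun M => (M k k).re) hXY
  refine mem_doublyStochastic_iff_sum.2
    ⟨fun _ _ => Complex.normSq_nonneg _, fun k => ?_, fun j => ?_⟩
  · simpa [Complex.mul_conj] using hdiag (mem_unitaryGroup_iff.1 hV) k
  · simpa [← Complex.normSq_eq_conj_mul_self] using hdiag (mem_unitaryGroup_iff'.1 hV) j

lemma Matrix.IsHermitian.re_diag_conj {σ : Matrix n n ℂ} (hσ : σ.IsHermitian) (U : Matrix n n ℂ)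
    (k : n) :
    ((star U * σ * U) k k).re =
      ((star U * hσ.eigenvectorUnitary).map Complex.normSq *ᵥ hσ.eigenvalues) k := by
  set V := star U * (hσ.eigenvectorUnitary : Matrix n n ℂ)
  have hσV : star U * σ * U = V * diagonal (RCLike.ofReal ∘ hσ.eigenvalues) * star V := by
    conv_lhs => rw [hσ.spectral_theorem, Unitary.conjStarAlgAut_apply]
    simp only [V, star_mul, star_star, Matrix.mul_assoc]
  rw [hσV, Matrix.mul_apply]
  simp only [Matrix.mul_diagonal, Matrix.star_apply, Complex.re_sum, mulVec, dotProduct,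
    Matrix.map_apply]
  refine Finset.sum_congr rfl fun j _ => ?_
  rw [Function.comp_apply, mul_right_comm, Complex.star_def, Complex.mul_conj]
  simp

lemma Matrix.IsHermitian.eigenvalues_eq_re_diag {M : Matrix n n ℂ} (hM : M.IsHermitian) (k : n) :
    hM.eigenvalues k =
      ((star (hM.eigenvectorUnitary : Matrix n n ℂ) * M * hM.eigenvectorUnitary) k k).re := by
  have h := hM.conjStarAlgAut_star_eigenvectorUnitary
  rw [Unitary.conjStarAlgAut_apply, Unitary.coe_star, star_star] at h
  simp [h]

lemma vnEntropy_le_sum_negMulLog_re_diag {σ : Matrix n n ℂ} (hσ : σ.PosSemidef)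
    {U : Matrix n n ℂ} (hU : U ∈ unitaryGroup n ℂ) :
    vnEntropy hσ.1 ≤ ∑ k, Real.negMulLog ((star U * σ * U) k k).re := by
  simp only [hσ.1.re_diag_conj]
  exact Real.concaveOn_negMulLog.sum_le_sum_mulVec_of_mem_doublyStochastic
    (map_normSq_mem_doublyStochastic (mul_mem (Unitary.star_mem hU) hσ.1.eigenvectorUnitary.2))
    fun j => hσ.eigenvalues_nonneg j

theorem le_vnEntropy_smul_add_smul {ρ σ : Matrix n n ℂ} (hρ : ρ.PosSemidef) (hσ : σ.PosSemidef)
    {a b : ℝ} (ha : 0 ≤ a) (hb : 0 ≤ b) (hab : a + b = 1) (h : (a • ρ + b • σ).IsHermitian) :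
    a * vnEntropy hρ.1 + b * vnEntropy hσ.1 ≤ vnEntropy h := by
  set U : Matrix n n ℂ := (h.eigenvectorUnitary : Matrix n n ℂ)
  have hU : U ∈ unitaryGroup n ℂ := h.eigenvectorUnitary.2
  calc a * vnEntropy hρ.1 + b * vnEntropy hσ.1
      ≤ a * ∑ k, Real.negMulLog ((star U * ρ * U) k k).re +
          b * ∑ k, Real.negMulLog ((star U * σ * U) k k).re := by
        gcongr
        exacts [vnEntropy_le_sum_negMulLog_re_diag hρ hU,
          vnEntropy_le_sum_negMulLog_re_diag hσ hU]
    _ = ∑ k, (a • Real.negMulLog ((star U * ρ * U) k k).re +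
          b • Real.negMulLog ((star U * σ * U) k k).re) := by
        simp only [Finset.mul_sum, Finset.sum_add_distrib, smul_eq_mul]
    _ ≤ ∑ k, Real.negMulLog (a • ((star U * ρ * U) k k).re + b • ((star U * σ * U) k k).re) :=
        Finset.sum_le_sum fun k _ => Real.concaveOn_negMulLog.2
          (hρ.re_diag_conj_nonneg U k) (hσ.re_diag_conj_nonneg U k) ha hb hab
    _ = vnEntropy h := by
        simp only [vnEntropy, h.eigenvalues_eq_re_diag, U, Matrix.mul_add, Matrix.add_mul,
          Matrix.mul_smul, Matrix.smul_mul]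
        simp

end Entropy

theorem monitoring_inequality_general {dA dB : ℕ} {ι : Type*} [Fintype ι] [DecidableEq ι]
    (A : ι → Matrix (Fin dA) (Fin dA) ℂ)
    (hproj : ∀ i j, A i * A j = if i = j then A i else 0)
    (hherm : ∀ i, (A i)ᴴ = A i)
    (ρ : Matrix (Fin dA × Fin dB) (Fin dA × Fin dB) ℂ)
    (hρ : ρ.PosSemidef)
    (ε : ℝ) (hε : ε ∈ Set.Icc (0 : ℝ) 1)
    (hM : ((1 - ε) • ρ + ε • pinch A ρ).IsHermitian)
    (hΦ : (pinch A ρ).IsHermitian) :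
    pinch A ((1 - ε) • ρ + ε • pinch A ρ) = pinch A ρ ∧
      vnEntropy hΦ - vnEntropy hM ≤ (1 - ε) * (vnEntropy hΦ - vnEntropy hρ.isHermitian) := by
  obtain ⟨hε0, hε1⟩ := hε
  refine ⟨?_, ?_⟩
  · rw [pinch_add, pinch_smul, pinch_smul, pinch_pinch A hproj, ← add_smul, sub_add_cancel,
      one_smul]
  · have hconcave := le_vnEntropy_smul_add_smul hρ (hρ.pinch A hherm) (sub_nonneg.2 hε1) hε0
      (sub_add_cancel 1 ε) hM
    linear_combination hconcave

/-- Monitoring inequality: `Φ_A(M_A^ε(ρ)) = Φ_A(ρ)` and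
`S(Φ_A(ρ)) − S(M_A^ε(ρ)) ≤ (1−ε)(S(Φ_A(ρ)) − S(ρ))`, i.e.
`ℜ_A(M_A^ε(ρ)) − ℜ_A(ρ) ≥ ε 𝕴_A(ρ)`. -/
theorem monitoring_inequality {dA dB : ℕ} {ι : Type*} [Fintype ι] [DecidableEq ι]
    (A : ι → Matrix (Fin dA) (Fin dA) ℂ)
    (hproj : ∀ i j, A i * A j = if i = j then A i else 0)
    (hherm : ∀ i, (A i)ᴴ = A i)
    (hsum : ∑ i, A i = 1)
    (ρ : Matrix (Fin dA × Fin dB) (Fin dA × Fin dB) ℂ)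
    (hρ : ρ.PosSemidef) (htr : ρ.trace = 1)
    (ε : ℝ) (hε : ε ∈ Set.Icc (0 : ℝ) 1)
    (hM : ((1 - ε) • ρ + ε • pinch A ρ).IsHermitian)
    (hΦ : (pinch A ρ).IsHermitian) :
    pinch A ((1 - ε) • ρ + ε • pinch A ρ) = pinch A ρ ∧
      vnEntropy hΦ - vnEntropy hM ≤ (1 - ε) * (vnEntropy hΦ - vnEntropy hρ.isHermitian) :=
  monitoring_inequality_general A hproj hherm ρ hρ ε hε hM hΦ
end
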